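/- arXiv:2106.02357 — 2 statements merged into one kernel-verified Lean document; each statement's English description precedes it below -/
import Mathlib

section
/- Let X be a real N × d matrix each of whose columns has ℓ2 norm 1, with XᵀX invertible, let α be a positive real with α ≤ 2/(d+1), and set B = I − α·XᵀX. Then the matrix powers Bⁿ converge to the zero matrix as n → ∞. -/
open Matrix Filter Finset Topology
open scoped ComplexOrder

/-!
The Gram matrix `G = XᵀX` is positive definite, and its trace is the sum of the squared column
norms, i.e. `d`. Hence every eigenvalue `λ` of `G` lies in `(0, d]`, so
`0 < αλ ≤ 2d/(d+1) < 2` and `|1 - αλ| < 1`. Diagonalising `G` by a unitary conjugation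
diagonalises every power of `1 - αG`, whose diagonal entries `(1 - αλ)ⁿ` tend to `0`.
-/

namespace Matrix

variable {n 𝕜 : Type*} [Fintype n] [DecidableEq n] [RCLike 𝕜]

theorem tendsto_diagonal_pow_atTop_nhds_zero {v : n → 𝕜} (hv : ∀ i, ‖v i‖ < 1) :
    Tendsto (fun k : ℕ => diagonal v ^ k) atTop (𝓝 0) := by
  simp_rw [diagonal_pow]
  rw [← diagonal_zero]
  refine continuous_id.matrix_diagonal.tendsto _ |>.comp (tendsto_pi_nhds.mpr fun i => ?_)
  exact tendsto_pow_atTop_nhds_zero_of_norm_lt_one (hv i)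

theorem IsHermitian.tendsto_pow_one_sub_smul_atTop_nhds_zero {A : Matrix n n 𝕜}
    (hA : A.IsHermitian) {α : 𝕜} (h : ∀ i, ‖1 - α * hA.eigenvalues i‖ < 1) :
    Tendsto (fun k : ℕ => (1 - α • A) ^ k) atTop (𝓝 0) := by
  set U := Unitary.conjStarAlgAut 𝕜 _ hA.eigenvectorUnitary
  have hconj : 1 - α • A = U (diagonal fun i => 1 - α * hA.eigenvalues i) := by
    conv_lhs => rw [hA.spectral_theorem]
    rw [← map_one U, ← map_smul, ← map_sub, ← diagonal_one, ← diagonal_smul, diagonal_sub]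
    rfl
  have hU : Continuous U := U.toAlgEquiv.toLinearMap.continuous_of_finiteDimensional
  have hpow : ∀ k : ℕ, (1 - α • A) ^ k = U ((diagonal fun i => 1 - α * hA.eigenvalues i) ^ k) :=
    fun k => by rw [hconj, map_pow]
  have hlim := (hU.tendsto 0).comp (tendsto_diagonal_pow_atTop_nhds_zero h)
  rw [map_zero] at hlim
  exact hlim.congr fun k => (hpow k).symm

theorem PosSemidef.eigenvalues_le_re_trace {A : Matrix n n 𝕜} (hA : A.PosSemidef) (i : n) :
    hA.isHermitian.eigenvalues i ≤ RCLike.re A.trace := by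
  rw [hA.isHermitian.trace_eq_sum_eigenvalues, map_sum]
  simp only [RCLike.ofReal_re]
  exact single_le_sum (fun j _ => hA.eigenvalues_nonneg j) (mem_univ i)

omit [DecidableEq n] in
theorem trace_transpose_mul_self {m R : Type*} [Fintype m] [CommSemiring R] (X : Matrix m n R) :
    (Xᵀ * X).trace = ∑ j, ∑ i, X i j ^ 2 := by
  simp [trace, mul_apply, sq]

end Matrix

theorem abs_one_sub_mul_lt_one {α μ : ℝ} (hα : 0 < α) (hμ : 0 < μ) (h : α * μ < 2) :
    |1 - α * μ| < 1 := by
  rw [abs_lt]; constructor <;> nlinarith [mul_pos hα hμ]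

/-- If each column of `X` is `ℓ2`-normalized, `XᵀX` is invertible,
`0 < α ≤ 2/(d+1)` and `B = I - α • XᵀX`, then `Bⁿ → 0` as `n → ∞`. -/
theorem pow_one_sub_smul_gram_tendsto_zero (N d : ℕ) (X : Matrix (Fin N) (Fin d) ℝ)
    (hcol : ∀ j : Fin d, ∑ i : Fin N, (X i j) ^ 2 = 1)
    (hinv : IsUnit (Xᵀ * X))
    (α : ℝ) (hα : 0 < α) (hα' : α ≤ 2 / ((d : ℝ) + 1))
    (B : Matrix (Fin d) (Fin d) ℝ)
    (hB : B = (1 : Matrix (Fin d) (Fin d) ℝ) - α • (Xᵀ * X)) :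
    Tendsto (fun n : ℕ => B ^ n) atTop (nhds (0 : Matrix (Fin d) (Fin d) ℝ)) := by
  have hpsd : (Xᵀ * X).PosSemidef := by
    simpa [conjTranspose_eq_transpose_of_trivial] using posSemidef_conjTranspose_mul_self X
  have hpd : (Xᵀ * X).PosDef := hpsd.posDef_iff_isUnit.mpr hinv
  have htrace : (Xᵀ * X).trace = d := by simp [trace_transpose_mul_self, hcol]
  subst hB
  refine hpsd.isHermitian.tendsto_pow_one_sub_smul_atTop_nhds_zero fun i => ?_
  have hpos : 0 < hpsd.isHermitian.eigenvalues i := hpd.eigenvalues_pos i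
  have hle : hpsd.isHermitian.eigenvalues i ≤ d := by
    simpa [htrace] using hpsd.eigenvalues_le_re_trace i
  have hαd : α * d < 2 := by
    calc α * d ≤ 2 / (d + 1) * d := by gcongr
      _ < 2 := by rw [div_mul_eq_mul_div, div_lt_iff₀ (by positivity)]; linarith
  rw [RCLike.ofReal_real_eq_id, id, Real.norm_eq_abs]
  exact abs_one_sub_mul_lt_one hα hpos ((mul_le_mul_of_nonneg_left hle hα.le).trans_lt hαd)
end

section
/- Let X be a real N × d matrix each of whose columns has ℓ2 norm 1, with XᵀX invertible, let α be a positive real with α ≤ 2/(d+1), and set B = I − α·XᵀX. Then I − B is invertible, the series ∑_{i=0}^{∞} Bⁱ converges, and (I − B)^{−1} = ∑_{i=0}^{∞} Bⁱ. -/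
/-!
Since `1 - B = α • XᵀX`, the matrix `1 - B` is invertible and
`∑_{i<k} Bⁱ = (1 - B)⁻¹ (1 - Bᵏ)`, so it suffices that `Bᵏ → 0`. Diagonalising the positive
definite Gram matrix `XᵀX` unitarily, `B` becomes diagonal with entries `1 - αλ`, where
`0 < λ ≤ tr (XᵀX) = d`; the bound `α ≤ 2 / (d + 1)` puts these entries in `(-1, 1)`.
-/

open Matrix Filter Finset Topology Unitary

variable {n : Type*} [Fintype n]

theorem Matrix.trace_transpose_mul_self_s7 {m R : Type*} [Fintype m] [CommSemiring R]
    (X : Matrix m n R) : (Xᵀ * X).trace = ∑ j, ∑ i, X i j ^ 2 := by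
  simp [trace, mul_apply, sq]

variable [DecidableEq n]

theorem Matrix.tendsto_geom_sum_of_tendsto_pow {R : Type*} [CommRing R] [TopologicalSpace R]
    [IsTopologicalRing R] {B : Matrix n n R} (hB : IsUnit (1 - B))
    (hpow : Tendsto (B ^ ·) atTop (𝓝 0)) :
    Tendsto (fun k ↦ ∑ i ∈ range k, B ^ i) atTop (𝓝 (1 - B)⁻¹) := by
  have hsum (k : ℕ) : ∑ i ∈ range k, B ^ i = (1 - B)⁻¹ * (1 - B ^ k) := by
    rw [← mul_neg_geom_sum, ← Matrix.mul_assoc,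
      nonsing_inv_mul _ ((isUnit_iff_isUnit_det _).mp hB), Matrix.one_mul]
  simp_rw [hsum]
  simpa using (hpow.const_sub 1).const_mul (1 - B)⁻¹

section RCLike

open scoped ComplexOrder

variable {𝕜 : Type*} [RCLike 𝕜]

theorem Matrix.tendsto_pow_conjStarAlgAut_diagonal (U : unitary (Matrix n n 𝕜)) {d : n → 𝕜}
    (hd : ∀ i, ‖d i‖ < 1) :
    Tendsto (conjStarAlgAut 𝕜 _ U (diagonal d) ^ ·) atTop (𝓝 0) := by
  simp_rw [← map_pow, diagonal_pow]
  have hcont : Continuous fun v : n → 𝕜 ↦ conjStarAlgAut 𝕜 _ U (diagonal v) := by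
    simp only [conjStarAlgAut_apply]
    fun_prop
  have hlim : Tendsto (fun k ↦ d ^ k) atTop (𝓝 0) :=
    tendsto_pi_nhds.mpr fun i ↦ tendsto_pow_atTop_nhds_zero_of_norm_lt_one (hd i)
  rw [show (0 : Matrix n n 𝕜) = conjStarAlgAut 𝕜 _ U (diagonal 0) by simp]
  exact (hcont.tendsto 0).comp hlim

theorem Matrix.IsHermitian.one_sub_smul_eq_conjStarAlgAut {A : Matrix n n 𝕜}
    (hA : A.IsHermitian) (c : ℝ) :
    1 - c • A = conjStarAlgAut 𝕜 _ hA.eigenvectorUnitary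
      (diagonal fun i ↦ ((1 - c * hA.eigenvalues i : ℝ) : 𝕜)) := by
  have hdiag : (diagonal fun i ↦ ((1 - c * hA.eigenvalues i : ℝ) : 𝕜))
      = 1 - (c : 𝕜) • diagonal (RCLike.ofReal ∘ hA.eigenvalues) := by
    ext i j
    by_cases h : i = j <;> simp [h]
  rw [hdiag, map_sub, map_one, map_smul, ← hA.spectral_theorem,
    RCLike.real_smul_eq_coe_smul (K := 𝕜)]

theorem Matrix.PosSemidef.eigenvalues_le_re_trace_s7 {A : Matrix n n 𝕜} (hA : A.PosSemidef)
    (i : n) : hA.1.eigenvalues i ≤ RCLike.re A.trace := by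
  rw [hA.1.trace_eq_sum_eigenvalues, map_sum]
  simp only [RCLike.ofReal_re]
  exact single_le_sum (fun j _ ↦ hA.eigenvalues_nonneg j) (mem_univ i)

end RCLike

theorem abs_one_sub_mul_lt_one_s7 {α t d : ℝ} (hα : 0 < α) (hα' : α ≤ 2 / (d + 1)) (ht : 0 < t)
    (htd : t ≤ d) : |1 - α * t| < 1 := by
  have hd : 0 < d + 1 := by linarith
  rw [le_div_iff₀ hd] at hα'
  rw [abs_lt]; constructor <;> nlinarith

/-- If each column of `X` is `ℓ2`-normalized, `XᵀX` is invertible,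
`0 < α ≤ 2/(d+1)` and `B = I - α • XᵀX`, then `I - B` is invertible, the series
`∑_{i=0}^{∞} Bⁱ` converges, and `(I - B)⁻¹ = ∑_{i=0}^{∞} Bⁱ`. -/
theorem geom_series_one_sub_smul_gram (N d : ℕ) (X : Matrix (Fin N) (Fin d) ℝ)
    (hcol : ∀ j : Fin d, ∑ i : Fin N, (X i j) ^ 2 = 1)
    (hinv : IsUnit (Xᵀ * X))
    (α : ℝ) (hα : 0 < α) (hα' : α ≤ 2 / ((d : ℝ) + 1))
    (B : Matrix (Fin d) (Fin d) ℝ)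
    (hB : B = (1 : Matrix (Fin d) (Fin d) ℝ) - α • (Xᵀ * X)) :
    IsUnit ((1 : Matrix (Fin d) (Fin d) ℝ) - B) ∧
      Tendsto (fun n : ℕ => ∑ i ∈ Finset.range (n + 1), B ^ i) atTop
        (nhds (((1 : Matrix (Fin d) (Fin d) ℝ) - B)⁻¹)) := by
  have hpsd : (Xᵀ * X).PosSemidef := by
    simpa using posSemidef_conjTranspose_mul_self X
  have hG : (Xᵀ * X).PosDef := hpsd.posDef_iff_isUnit.mpr hinv
  have htrace : (Xᵀ * X).trace = d := by simp [trace_transpose_mul_self_s7, hcol]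
  have hunit : IsUnit (1 - B) := by
    rw [hB, sub_sub_cancel]
    simpa [Units.smul_def] using hinv.smul (Units.mk0 α hα.ne')
  have hpow : Tendsto (B ^ ·) atTop (𝓝 0) := by
    rw [hB, hG.1.one_sub_smul_eq_conjStarAlgAut]
    refine tendsto_pow_conjStarAlgAut_diagonal _ fun i ↦ ?_
    refine abs_one_sub_mul_lt_one_s7 hα hα' (hG.eigenvalues_pos i) ?_
    simpa [htrace] using hpsd.eigenvalues_le_re_trace_s7 i
  exact ⟨hunit, (tendsto_geom_sum_of_tendsto_pow hunit hpow).comp (tendsto_add_atTop_nat 1)⟩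
end
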